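/- arXiv:2305.09111 — 4 statements merged into one kernel-verified Lean document; each statement's English description precedes it below -/
import Mathlib

section
/- For any nonempty candidate set C ⊆ S, MinTotal(C) = min_{g ∈ G} ( |C| + Σ_{r ∈ R\{r*}} MinTotal(C_{g,r}) ); that is, extending the minimum in the defining recursion of MinTotal from useful guesses to all guesses g ∈ G does not change its value, and the minimum over all g ∈ G is attained at a useful guess. -/
/-!
Formalization of guessing games (Wordle-style), following the paper's definitions:
guesses `G`, secrets `S ⊆ G`, responses `R` with `|R| > 1`, affirmative response
`r* ∈ R`, and an answering function `a` with `a(g,s) = r* ↔ g = s`.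
-/

structure GuessingGame (α ρ : Type*) [DecidableEq α] [DecidableEq ρ] where
  G : Finset α
  S : Finset α
  R : Finset ρ
  rstar : ρ
  ans : α → α → ρ
  S_subset_G : S ⊆ G
  one_lt_card_R : 1 < R.card
  rstar_mem : rstar ∈ R
  ans_mem : ∀ g ∈ G, ∀ s ∈ S, ans g s ∈ R
  ans_eq_rstar_iff : ∀ g ∈ G, ∀ s ∈ S, (ans g s = rstar ↔ g = s)

namespace GuessingGame

variable {α ρ : Type*} [DecidableEq α] [DecidableEq ρ] (gm : GuessingGame α ρ)

/-- The split `C_{g,r} = {c ∈ C : a(g,c) = r}`. -/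
def split (C : Finset α) (g : α) (r : ρ) : Finset α :=
  C.filter fun c => gm.ans g c = r

/-- `nSplits(g,C) = |{r ∈ R : C_{g,r} ≠ ∅}|`. -/
def nSplits (g : α) (C : Finset α) : ℕ :=
  (gm.R.filter fun r => (gm.split C g r).Nonempty).card

/-- The useful guesses `UG(C)`: for `|C| > 1` the guesses `g ∈ G` with
`nSplits(g,C) ≠ 1`; for `|C| ≤ 1`, `UG(C) = C`. -/
def UG (C : Finset α) : Finset α :=
  if 1 < C.card then gm.G.filter fun g => gm.nSplits g C ≠ 1 else C

/-- `MaxSplits(C) = max_{g ∈ G} nSplits(g,C)`. -/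
def MaxSplits (C : Finset α) : ℕ :=
  gm.G.sup fun g => gm.nSplits g C

end GuessingGame

/-- `Bound(n,b)`: `Bound(0,b) = 0`, `Bound(n,1) = n(n+1)/2`, and for `n > 0`, `b > 1`,
`Bound(n,b) = Σ_{i=1}^{k} i·b^{i-1} + (k+1)·(n - (b^k - 1)/(b-1))` where
`k = ⌊log_b (n(b-1)+1)⌋`. -/
def Bound (n b : ℕ) : ℕ :=
  if n = 0 then 0
  else if b = 1 then n * (n + 1) / 2
  else
    (∑ i ∈ Finset.range (Nat.log b (n * (b - 1) + 1)), (i + 1) * b ^ i) +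
      (Nat.log b (n * (b - 1) + 1) + 1) *
        (n - (b ^ Nat.log b (n * (b - 1) + 1) - 1) / (b - 1))

namespace GuessingGame

variable {α ρ : Type*} [DecidableEq α] [DecidableEq ρ] (gm : GuessingGame α ρ)

/-- Fuel-based implementation of the well-founded recursion defining `MinTotal`:
`MinTotal(∅) = 0` and for nonempty `C`,
`MinTotal(C) = min_{g ∈ UG(C)} (|C| + Σ_{r ∈ R \ {r*}} MinTotal(C_{g,r}))`.
Fuel `|C|` suffices since for a useful guess every split is a proper subset of `C`. -/
noncomputable def MinTotalAux : ℕ → Finset α → ℕ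
  | 0, _ => 0
  | n + 1, C =>
    if C = ∅ then 0
    else
      sInf (↑((gm.UG C).image fun g =>
        C.card + ∑ r ∈ gm.R.erase gm.rstar, MinTotalAux n (gm.split C g r)) : Set ℕ)

/-- `MinTotal(C)`. -/
noncomputable def MinTotal (C : Finset α) : ℕ :=
  gm.MinTotalAux C.card C

/-- `V*(g,C) = |C| + Σ_{r ∈ R \ {r*}} MinTotal(C_{g,r})`. -/
noncomputable def Vstar (g : α) (C : Finset α) : ℕ :=
  C.card + ∑ r ∈ gm.R.erase gm.rstar, gm.MinTotal (gm.split C g r)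

/-- The lower bounds `LB_i` (`i ≥ 1`; `LB 0` is junk):
`LB_1(C) = Bound(|C|, MaxSplits(S))`, `LB_2(C) = Bound(|C|, MaxSplits(C))`, and for
`i ≥ 1`, `LB_{i+2}(∅) = 0` and `LB_{i+2}(C) = min_{g ∈ UG(C)} V_i(g,C)` for nonempty `C`,
where `V_i(g,C) = |C| + Σ_{r ∈ R \ {r*}} LB_i(C_{g,r})`. -/
noncomputable def LB : ℕ → Finset α → ℕ
  | 0, _ => 0
  | 1, C => Bound C.card (gm.MaxSplits gm.S)
  | 2, C => Bound C.card (gm.MaxSplits C)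
  | n + 3, C =>
    if C = ∅ then 0
    else
      sInf (↑((gm.UG C).image fun g =>
        C.card + ∑ r ∈ gm.R.erase gm.rstar, LB (n + 1) (gm.split C g r)) : Set ℕ)

/-- `V_i(g,C) = |C| + Σ_{r ∈ R \ {r*}} LB_i(C_{g,r})`. -/
noncomputable def V (i : ℕ) (g : α) (C : Finset α) : ℕ :=
  C.card + ∑ r ∈ gm.R.erase gm.rstar, gm.LB i (gm.split C g r)

end GuessingGame

section Helper

namespace GuessingGame

variable {α ρ : Type*} [DecidableEq α] [DecidableEq ρ] (gm : GuessingGame α ρ)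

lemma split_subset (C : Finset α) (g : α) (r : ρ) : gm.split C g r ⊆ C :=
  Finset.filter_subset _ _

lemma split_card_lt {C : Finset α} (hCS : C ⊆ gm.S) (hC : C.Nonempty) {g : α}
    (hg : g ∈ gm.UG C) {r : ρ} (hr : r ≠ gm.rstar) :
    (gm.split C g r).card < C.card := by
  unfold UG at hg
  by_cases h1 : 1 < C.card
  · rw [if_pos h1, Finset.mem_filter] at hg
    obtain ⟨hgG, hns⟩ := hg
    -- find c ∈ C with ans g c ≠ r
    by_cases hall : ∀ c ∈ C, gm.ans g c = r
    · exfalso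
      apply hns
      obtain ⟨c0, hc0⟩ := hC
      have hrR : r ∈ gm.R := hall c0 hc0 ▸ gm.ans_mem g hgG c0 (hCS hc0)
      have : gm.R.filter (fun r' => (gm.split C g r').Nonempty) = {r} := by
        apply Finset.eq_singleton_iff_unique_mem.mpr
        constructor
        · exact Finset.mem_filter.mpr ⟨hrR, ⟨c0, Finset.mem_filter.mpr ⟨hc0, hall c0 hc0⟩⟩⟩
        · intro r' hr'
          rw [Finset.mem_filter] at hr'
          obtain ⟨c, hc⟩ := hr'.2
          rw [GuessingGame.split, Finset.mem_filter] at hc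
          rw [← hc.2, hall c hc.1]
      rw [GuessingGame.nSplits, this, Finset.card_singleton]
    · push_neg at hall
      obtain ⟨c, hcC, hcr⟩ := hall
      apply Finset.card_lt_card
      constructor
      · exact gm.split_subset C g r
      · intro hsub
        have := hsub hcC
        rw [GuessingGame.split, Finset.mem_filter] at this
        exact hcr this.2
  · rw [if_neg h1] at hg
    have hcard : C.card = 1 := le_antisymm (not_lt.mp h1) hC.card_pos
    obtain ⟨c, hc⟩ := Finset.card_eq_one.mp hcard
    subst hc
    have hg' : g = c := Finset.mem_singleton.mp hg
    have : gm.split {c} g r = ∅ := by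
      rw [GuessingGame.split, Finset.filter_eq_empty_iff]
      intro x hxmem
      rw [Finset.mem_singleton] at hxmem
      subst hxmem
      rw [hg']
      have : gm.ans x x = gm.rstar :=
        (gm.ans_eq_rstar_iff x (gm.S_subset_G (hCS (Finset.mem_singleton_self x))) x
          (hCS (Finset.mem_singleton_self x))).mpr rfl
      rw [this]
      exact fun h => hr h.symm
    rw [this]
    simp

lemma minTotalAux_succ : ∀ (n : ℕ) (C : Finset α), C ⊆ gm.S → C.card ≤ n →
    gm.MinTotalAux (n + 1) C = gm.MinTotalAux n C := by
  intro n
  induction n with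
  | zero =>
    intro C _ hn
    have : C = ∅ := Finset.card_eq_zero.mp (Nat.le_zero.mp hn)
    subst this
    simp [MinTotalAux]
  | succ n ih =>
    intro C hCS hn
    by_cases hC : C = ∅
    · subst hC; simp [MinTotalAux]
    · have hCne : C.Nonempty := Finset.nonempty_iff_ne_empty.mpr hC
      show gm.MinTotalAux (n + 1 + 1) C = gm.MinTotalAux (n + 1) C
      rw [MinTotalAux, MinTotalAux, if_neg hC, if_neg hC]
      apply congrArg
      apply congrArg
      apply Finset.image_congr
      intro g hg
      dsimp only
      congr 1
      apply Finset.sum_congr rfl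
      intro r hr
      have hrne : r ≠ gm.rstar := (Finset.mem_erase.mp hr).1
      have hlt : (gm.split C g r).card < C.card := gm.split_card_lt hCS hCne hg hrne
      exact ih (gm.split C g r) ((gm.split_subset C g r).trans hCS)
        (Nat.lt_succ_iff.mp (lt_of_lt_of_le hlt hn))

lemma minTotalAux_eq {C : Finset α} (hCS : C ⊆ gm.S) {n : ℕ} (hn : C.card ≤ n) :
    gm.MinTotalAux n C = gm.MinTotal C := by
  induction n with
  | zero =>
    have : C = ∅ := Finset.card_eq_zero.mp (Nat.le_zero.mp hn)
    subst this
    simp [MinTotal, MinTotalAux]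
  | succ n ih =>
    rcases Nat.lt_or_ge C.card (n + 1) with h | h
    · rw [gm.minTotalAux_succ n C hCS (Nat.lt_succ_iff.mp h)]
      exact ih (Nat.lt_succ_iff.mp h)
    · have : C.card = n + 1 := le_antisymm hn h
      rw [MinTotal, this]

/-- Key unfolding: `MinTotal C = sInf over UG of Vstar`. -/
lemma minTotal_eq_inf_UG {C : Finset α} (hCS : C ⊆ gm.S) (hC : C.Nonempty) :
    gm.MinTotal C =
      sInf (↑((gm.UG C).image fun g =>
        C.card + ∑ r ∈ gm.R.erase gm.rstar, gm.MinTotal (gm.split C g r)) : Set ℕ) := by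
  obtain ⟨k, hk⟩ : ∃ k, C.card = k + 1 :=
    Nat.exists_eq_succ_of_ne_zero hC.card_pos.ne'
  conv_lhs => rw [MinTotal, hk, MinTotalAux, if_neg hC.ne_empty]
  apply congrArg
  apply congrArg
  apply Finset.image_congr
  intro g hg
  dsimp only
  congr 1
  apply Finset.sum_congr rfl
  intro r hr
  have hrne : r ≠ gm.rstar := (Finset.mem_erase.mp hr).1
  have hlt : (gm.split C g r).card < C.card := gm.split_card_lt hCS hC hg hrne
  exact gm.minTotalAux_eq ((gm.split_subset C g r).trans hCS)
    (Nat.lt_succ_iff.mp (show (gm.split C g r).card < k + 1 from hk ▸ hlt))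

lemma UG_subset_G {C : Finset α} (hCS : C ⊆ gm.S) : gm.UG C ⊆ gm.G := by
  unfold UG
  by_cases h1 : 1 < C.card
  · rw [if_pos h1]; exact Finset.filter_subset _ _
  · rw [if_neg h1]; exact hCS.trans gm.S_subset_G

lemma UG_nonempty {C : Finset α} (hCS : C ⊆ gm.S) (hC : C.Nonempty) :
    (gm.UG C).Nonempty := by
  unfold UG
  by_cases h1 : 1 < C.card
  · rw [if_pos h1]
    obtain ⟨c, hc⟩ := hC
    obtain ⟨c', hc', hne⟩ := Finset.exists_mem_ne h1 c
    have hcG : c ∈ gm.G := gm.S_subset_G (hCS hc)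
    have hcS : c ∈ gm.S := hCS hc
    have hc'S : c' ∈ gm.S := hCS hc'
    refine ⟨c, Finset.mem_filter.mpr ⟨hcG, ?_⟩⟩
    have hstar : gm.ans c c = gm.rstar := (gm.ans_eq_rstar_iff c hcG c hcS).mpr rfl
    have hans' : gm.ans c c' ≠ gm.rstar := fun h =>
      hne ((gm.ans_eq_rstar_iff c hcG c' hc'S).mp h).symm
    have h2 : 1 < gm.nSplits c C := by
      rw [GuessingGame.nSplits]
      apply Finset.one_lt_card.mpr
      refine ⟨gm.rstar, ?_, gm.ans c c', ?_, fun h => hans' h.symm⟩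
      · exact Finset.mem_filter.mpr ⟨gm.rstar_mem,
          ⟨c, Finset.mem_filter.mpr ⟨hc, hstar⟩⟩⟩
      · exact Finset.mem_filter.mpr ⟨gm.ans_mem c hcG c' hc'S,
          ⟨c', Finset.mem_filter.mpr ⟨hc', rfl⟩⟩⟩
    exact h2.ne'
  · rw [if_neg h1]; exact hC

/-- Every guess in G has value at least `MinTotal C`. -/
lemma minTotal_le_vstar {C : Finset α} (hCS : C ⊆ gm.S) (hC : C.Nonempty) {g : α}
    (hg : g ∈ gm.G) :
    gm.MinTotal C ≤ C.card + ∑ r ∈ gm.R.erase gm.rstar, gm.MinTotal (gm.split C g r) := by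
  by_cases hgUG : g ∈ gm.UG C
  · rw [gm.minTotal_eq_inf_UG hCS hC]
    exact Nat.sInf_le (Finset.mem_coe.mpr (Finset.mem_image_of_mem _ hgUG))
  · by_cases h1 : 1 < C.card
    · -- g is not useful: nSplits g C = 1, all of C maps to one response r0 ≠ r*
      have hns : gm.nSplits g C = 1 := by
        by_contra h
        exact hgUG (by rw [GuessingGame.UG, if_pos h1]; exact Finset.mem_filter.mpr ⟨hg, h⟩)
      obtain ⟨r0, hr0⟩ := Finset.card_eq_one.mp hns
      obtain ⟨c0, hc0⟩ := hC
      have hmemfilter : ∀ c ∈ C, gm.ans g c ∈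
          gm.R.filter (fun r' => (gm.split C g r').Nonempty) := by
        intro c hc
        exact Finset.mem_filter.mpr ⟨gm.ans_mem g hg c (hCS hc),
          ⟨c, Finset.mem_filter.mpr ⟨hc, rfl⟩⟩⟩
      have hall : ∀ c ∈ C, gm.ans g c = r0 := by
        intro c hc
        have := hmemfilter c hc
        rw [hr0, Finset.mem_singleton] at this
        exact this
      have hr0star : r0 ≠ gm.rstar := by
        intro h
        obtain ⟨c', hc', hne⟩ := Finset.exists_mem_ne h1 c0
        have h1' : g = c0 := (gm.ans_eq_rstar_iff g hg c0 (hCS hc0)).mp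
          (h ▸ hall c0 hc0)
        have h2' : g = c' := (gm.ans_eq_rstar_iff g hg c' (hCS hc')).mp
          (h ▸ hall c' hc')
        exact hne (h2' ▸ h1')
      have hr0R : r0 ∈ gm.R := hall c0 hc0 ▸ gm.ans_mem g hg c0 (hCS hc0)
      have hsplit : gm.split C g r0 = C := by
        rw [GuessingGame.split, Finset.filter_eq_self]
        exact hall
      calc gm.MinTotal C = gm.MinTotal (gm.split C g r0) := by rw [hsplit]
        _ ≤ ∑ r ∈ gm.R.erase gm.rstar, gm.MinTotal (gm.split C g r) :=
            Finset.single_le_sum (f := fun r => gm.MinTotal (gm.split C g r))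
              (fun r _ => Nat.zero_le _) (Finset.mem_erase.mpr ⟨hr0star, hr0R⟩)
        _ ≤ C.card + ∑ r ∈ gm.R.erase gm.rstar, gm.MinTotal (gm.split C g r) :=
            Nat.le_add_left _ _
    · -- |C| = 1: MinTotal C = 1 ≤ C.card + ...
      have hcard : C.card = 1 := le_antisymm (not_lt.mp h1) hC.card_pos
      have : gm.MinTotal C ≤ C.card := by
        rw [gm.minTotal_eq_inf_UG hCS hC]
        obtain ⟨c, hc⟩ := Finset.card_eq_one.mp hcard
        subst hc
        have hcUG : c ∈ gm.UG {c} := by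
          rw [GuessingGame.UG, if_neg h1]; exact Finset.mem_singleton_self c
        have hsplitempty : ∀ r ∈ gm.R.erase gm.rstar, gm.split {c} c r = ∅ := by
          intro r hr
          rw [GuessingGame.split, Finset.filter_eq_empty_iff]
          intro x hx
          rw [Finset.mem_singleton] at hx
          subst hx
          rw [(gm.ans_eq_rstar_iff x (gm.S_subset_G (hCS (Finset.mem_singleton_self x)))
            x (hCS (Finset.mem_singleton_self x))).mpr rfl]
          exact fun h => (Finset.mem_erase.mp hr).1 h.symm
        have hMTempty : gm.MinTotal (∅ : Finset α) = 0 := by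
          simp [MinTotal, MinTotalAux]
        have heq : Finset.card ({c} : Finset α) +
            ∑ r ∈ gm.R.erase gm.rstar, gm.MinTotal (gm.split {c} c r) =
            Finset.card ({c} : Finset α) := by
          rw [Finset.sum_congr rfl (fun r hr => by rw [hsplitempty r hr, hMTempty])]
          simp
        have hmem' : Finset.card ({c} : Finset α) +
            ∑ r ∈ gm.R.erase gm.rstar, gm.MinTotal (gm.split {c} c r) ∈
            (↑((gm.UG {c}).image fun g => Finset.card ({c} : Finset α) +
              ∑ r ∈ gm.R.erase gm.rstar, gm.MinTotal (gm.split {c} g r)) : Set ℕ) :=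
          Finset.mem_coe.mpr (Finset.mem_image_of_mem _ hcUG)
        exact le_of_le_of_eq (Nat.sInf_le hmem') heq
      exact this.trans (Nat.le_add_right _ _)

end GuessingGame

end Helper

section Statements

open GuessingGame

variable {α ρ : Type*} [DecidableEq α] [DecidableEq ρ]

theorem statement_1 (gm : GuessingGame α ρ) (C : Finset α) (hCS : C ⊆ gm.S)
    (hC : C.Nonempty) :
    gm.MinTotal C =
      sInf (↑(gm.G.image fun g =>
        C.card + ∑ r ∈ gm.R.erase gm.rstar, gm.MinTotal (gm.split C g r)) : Set ℕ) ∧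
    ∃ g ∈ gm.UG C,
      C.card + ∑ r ∈ gm.R.erase gm.rstar, gm.MinTotal (gm.split C g r) =
        sInf (↑(gm.G.image fun g' =>
          C.card + ∑ r ∈ gm.R.erase gm.rstar, gm.MinTotal (gm.split C g' r)) : Set ℕ) := by
  set f : α → ℕ := fun g =>
    C.card + ∑ r ∈ gm.R.erase gm.rstar, gm.MinTotal (gm.split C g r) with hf
  have hUGsub : gm.UG C ⊆ gm.G := gm.UG_subset_G hCS
  have hUGne : (gm.UG C).Nonempty := gm.UG_nonempty hCS hC
  have hUGeq : gm.MinTotal C = sInf (↑((gm.UG C).image f) : Set ℕ) :=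
    gm.minTotal_eq_inf_UG hCS hC
  -- MinTotal C is attained at some g ∈ UG C
  have hUGset_ne : (↑((gm.UG C).image f) : Set ℕ).Nonempty := by
    obtain ⟨g, hg⟩ := hUGne
    exact ⟨f g, Finset.mem_coe.mpr (Finset.mem_image_of_mem _ hg)⟩
  have hmem : gm.MinTotal C ∈ (↑((gm.UG C).image f) : Set ℕ) := by
    rw [hUGeq]; exact Nat.sInf_mem hUGset_ne
  obtain ⟨g0, hg0UG, hg0⟩ := Finset.mem_image.mp (Finset.mem_coe.mp hmem)
  have hGset_ne : (↑(gm.G.image f) : Set ℕ).Nonempty := by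
    obtain ⟨g, hg⟩ := hUGne
    exact ⟨f g, Finset.mem_coe.mpr (Finset.mem_image_of_mem _ (hUGsub hg))⟩
  have hle : sInf (↑(gm.G.image f) : Set ℕ) ≤ gm.MinTotal C :=
    Nat.sInf_le (by
      rw [← hg0]
      exact Finset.mem_coe.mpr (Finset.mem_image_of_mem _ (hUGsub hg0UG)))
  have hge : gm.MinTotal C ≤ sInf (↑(gm.G.image f) : Set ℕ) := by
    apply le_csInf hGset_ne
    rintro b hb
    obtain ⟨g, hgG, rfl⟩ := Finset.mem_image.mp (Finset.mem_coe.mp hb)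
    exact gm.minTotal_le_vstar hCS hC hgG
  have hmain : gm.MinTotal C = sInf (↑(gm.G.image f) : Set ℕ) := le_antisymm hge hle
  exact ⟨hmain, g0, hg0UG, hg0.trans hmain⟩

end Statements
end

section
/- Fix an integer b > 1. The function n ↦ Bound(n,b) given by the closed formula satisfies the recurrence Bound(0,b) = 0 and, for every integer n ≥ 1, Bound(n,b) = n + min { Σ_{i=1}^{b} Bound(a_i, b) : (a_1,…,a_b) ∈ ℕ^b, Σ_{i=1}^{b} a_i = n − 1 }. (Equivalently, Bound(n,b) is the minimum possible sum of depths of the nodes of a rooted tree with n nodes in which every node has at most b children, where the root has depth 1.) -/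
/-!
Number the nodes of the infinite complete `b`-ary tree `0, 1, 2, …` in breadth-first order, so
that the children of node `q` are `b q + 1, …, b q + b` and node `j` has depth `bfsDepth b j`
(the root has depth `0`). The closed form makes `Bound n b` the sum of `bfsDepth b j + 1` over
`j < n`. Counting children gives
`Bound (b q + r + 1) b = b q + r + 1 + b · Bound q b + r · (bfsDepth b q + 1)` for `r ≤ b`, the
value of the balanced split of `m = b q + r` into `r` parts `q + 1` and `b - r` parts `q`.
Conversely, a largest part `c + 1` of a split of `m + 1` has `m / b ≤ c`, and lowering it by one
decreases `∑ Bound (a i) b` by `bfsDepth b c + 1 ≥ bfsDepth b (m / b) + 1`, which is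
`Bound (m + 2) b - Bound (m + 1) b - 1`; so by induction on `m` no split beats the balanced one.
-/

open Finset

lemma Fintype.sum_comp_update_add {ι α M : Type*} [Fintype ι] [DecidableEq ι] [AddCommMonoid M]
    (f : ι → α) (g : α → M) (i : ι) (x : α) :
    ∑ j, g (Function.update f i x j) + g (f i) = ∑ j, g (f j) + g x := by
  rw [← Function.comp_def g, Function.comp_update, sum_update_of_mem (mem_univ i)]
  simp only [Function.comp_apply]
  rw [sum_eq_add_sum_sdiff_singleton_of_mem (mem_univ i) (fun j => g (f j))]
  abel

lemma Fin.sum_ite_val_lt {M : Type*} [AddCommMonoid M] {n r : ℕ} (hr : r ≤ n) (x : M) :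
    ∑ i : Fin n, (if (i : ℕ) < r then x else 0) = r • x := by
  rw [sum_ite, sum_const_zero, add_zero, Finset.sum_const, card_filter_val_lt, min_eq_right hr]

def bfsDepth (b j : ℕ) : ℕ := Nat.log b (j * (b - 1) + 1)

/-- The closed form of `Bound n b`, with the level `k = ⌊log_b (n (b - 1) + 1)⌋` made a free
parameter and `(b ^ k - 1) / (b - 1)` written as a geometric sum. -/
def boundAtLevel (b k n : ℕ) : ℕ :=
  (∑ i ∈ range k, (i + 1) * b ^ i) + (k + 1) * (n - ∑ i ∈ range k, b ^ i)

section CompleteTree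

variable {b : ℕ}

lemma bfsDepth_mono {j j' : ℕ} (h : j ≤ j') : bfsDepth b j ≤ bfsDepth b j' :=
  Nat.log_mono_right (by gcongr)

/-- The first node of depth `k` is node `1 + b + ⋯ + b ^ (k - 1)`. -/
lemma le_bfsDepth_iff (hb : 1 < b) {k j : ℕ} :
    k ≤ bfsDepth b j ↔ ∑ i ∈ range k, b ^ i ≤ j := by
  obtain ⟨c, rfl⟩ : ∃ c, b = c + 1 := ⟨b - 1, by omega⟩
  rw [bfsDepth, Nat.le_log_iff_pow_le hb (by omega), ← geom_sum_mul_add, Nat.add_sub_cancel,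
    add_le_add_iff_right, Nat.mul_le_mul_right_iff (by omega)]

lemma bfsDepth_succ (hb : 1 < b) (j : ℕ) : bfsDepth b (j + 1) = bfsDepth b (j / b) + 1 := by
  refine eq_of_forall_le_iff fun k => ?_
  cases k with
  | zero => simp
  | succ k =>
    rw [le_bfsDepth_iff hb, geom_sum_succ, add_le_add_iff_right, add_le_add_iff_right,
      le_bfsDepth_iff hb, Nat.le_div_iff_mul_le (by omega), mul_comm]

lemma boundAtLevel_succ_right {k n : ℕ} (h : ∑ i ∈ range k, b ^ i ≤ n) :
    boundAtLevel b k (n + 1) = boundAtLevel b k n + (k + 1) := by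
  rw [boundAtLevel, boundAtLevel, Nat.sub_add_comm h, mul_add_one, add_assoc]

/-- The closed form does not jump when `n` enters the next level. -/
lemma boundAtLevel_succ_left (k : ℕ) :
    boundAtLevel b (k + 1) (∑ i ∈ range (k + 1), b ^ i) =
      boundAtLevel b k (∑ i ∈ range (k + 1), b ^ i) := by
  simp only [boundAtLevel, Nat.sub_self, mul_zero, add_zero, sum_range_succ,
    Nat.add_sub_cancel_left]

lemma Bound_eq_boundAtLevel (hb : 1 < b) (n : ℕ) :
    Bound n b = boundAtLevel b (bfsDepth b n) n := by
  rcases Nat.eq_zero_or_pos n with rfl | hn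
  · simp [Bound, boundAtLevel, bfsDepth]
  · rw [Bound, if_neg hn.ne', if_neg hb.ne', boundAtLevel, Nat.geomSum_eq hb, bfsDepth]

lemma Bound_succ (hb : 1 < b) (n : ℕ) : Bound (n + 1) b = Bound n b + (bfsDepth b n + 1) := by
  set k := bfsDepth b n
  have hstart : ∑ i ∈ range k, b ^ i ≤ n := (le_bfsDepth_iff hb).1 le_rfl
  have hnext : n < ∑ i ∈ range (k + 1), b ^ i := by
    rw [← not_le, ← le_bfsDepth_iff hb]
    omega
  have hle : bfsDepth b (n + 1) ≤ k + 1 := by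
    rw [bfsDepth_succ hb]
    exact Nat.succ_le_succ (bfsDepth_mono (Nat.div_le_self n b))
  have hge : k ≤ bfsDepth b (n + 1) := bfsDepth_mono n.le_succ
  rw [Bound_eq_boundAtLevel hb, Bound_eq_boundAtLevel hb, ← boundAtLevel_succ_right hstart]
  rcases hle.eq_or_lt with hk | hk
  · have hreach : ∑ i ∈ range (k + 1), b ^ i = n + 1 :=
      le_antisymm ((le_bfsDepth_iff hb).1 hk.ge) hnext
    rw [hk, ← hreach, boundAtLevel_succ_left]
  · rw [show bfsDepth b (n + 1) = k by omega]

lemma Bound_one (hb : 1 < b) : Bound 1 b = 1 := by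
  simpa [Bound, bfsDepth] using Bound_succ hb 0

/-- The nodes `b q + 1, …, b q + r` are children of node `q`. -/
lemma Bound_mul_add_add_one (hb : 1 < b) (q : ℕ) {r : ℕ} (hr : r ≤ b) :
    Bound (b * q + r + 1) b = Bound (b * q + 1) b + r * (bfsDepth b q + 2) := by
  induction r with
  | zero => simp
  | succ r ih =>
    have hdiv : (b * q + r) / b = q := by
      rw [Nat.mul_add_div (by omega), Nat.div_eq_of_lt (by omega), add_zero]
    rw [← add_assoc, Bound_succ hb, ih (by omega), bfsDepth_succ hb, hdiv]
    ring

lemma Bound_mul_add_one (hb : 1 < b) (q : ℕ) :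
    Bound (b * q + 1) b = b * q + 1 + b * Bound q b := by
  induction q with
  | zero => exact Bound_one hb
  | succ q ih =>
    rw [mul_add_one, Bound_mul_add_add_one hb q le_rfl, ih, Bound_succ hb]
    ring

lemma Bound_succ_le_add_sum (hb : 1 < b) {ι : Type*} [Fintype ι] (hι : Fintype.card ι ≤ b) :
    ∀ (m : ℕ) (a : ι → ℕ), ∑ i, a i = m → Bound (m + 1) b ≤ m + 1 + ∑ i, Bound (a i) b := by
  classical
  intro m
  induction m with
  | zero =>
    intro a _
    rw [Bound_one hb]
    omega
  | succ m ih =>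
    intro a hsum
    obtain ⟨i₀, -, hi₀⟩ : ∃ i₀ ∈ univ, a i₀ ≠ 0 := exists_ne_zero_of_sum_ne_zero (by omega)
    obtain ⟨i, -, hmax⟩ := exists_max_image univ a ⟨i₀, mem_univ i₀⟩
    obtain ⟨c, hc⟩ : ∃ c, a i = c + 1 :=
      Nat.exists_eq_add_one.2 ((Nat.pos_of_ne_zero hi₀).trans_le (hmax i₀ (mem_univ i₀)))
    have hbig : m / b ≤ c := by
      have : ∑ j, a j ≤ a i * b :=
        calc ∑ j, a j ≤ ∑ _j : ι, a i := sum_le_sum fun j _ => hmax j (mem_univ j)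
          _ ≤ a i * b := by rw [sum_const, card_univ, smul_eq_mul, mul_comm]; gcongr
      exact Nat.lt_add_one_iff.1 ((Nat.div_lt_iff_lt_mul (by omega)).2 (by rw [← hc]; omega))
    have hsum' : ∑ j, Function.update a i c j = m := by
      have := Fintype.sum_comp_update_add a id i c
      simp only [id, hc] at this
      omega
    have hdecr : ∑ j, Bound (Function.update a i c j) b + (bfsDepth b c + 1) =
        ∑ j, Bound (a j) b := by
      have := Fintype.sum_comp_update_add a (Bound · b) i c
      rw [hc, Bound_succ hb] at this
      omega
    have := ih _ hsum'
    have := bfsDepth_mono (b := b) hbig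
    rw [Bound_succ hb (m + 1), bfsDepth_succ hb]
    omega

/-- The balanced split: `m % b` parts of size `m / b + 1` and the others of size `m / b`. -/
lemma exists_sum_eq_and_Bound_succ_eq (hb : 1 < b) (m : ℕ) :
    ∃ a : Fin b → ℕ, ∑ i, a i = m ∧ Bound (m + 1) b = m + 1 + ∑ i, Bound (a i) b := by
  have hr : m % b ≤ b := (Nat.mod_lt m (by omega)).le
  refine ⟨fun i => m / b + if (i : ℕ) < m % b then 1 else 0, ?_, ?_⟩
  · rw [sum_add_distrib, Fin.sum_ite_val_lt hr, sum_const, card_univ, Fintype.card_fin,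
      smul_eq_mul, smul_eq_mul, mul_one, Nat.div_add_mod]
  · have hparts : ∀ i : Fin b, Bound (m / b + if (i : ℕ) < m % b then 1 else 0) b =
        Bound (m / b) b + if (i : ℕ) < m % b then bfsDepth b (m / b) + 1 else 0 := by
      intro i
      split_ifs
      · exact Bound_succ hb _
      · rfl
    rw [sum_congr rfl fun i _ => hparts i, sum_add_distrib, Fin.sum_ite_val_lt hr, sum_const,
      card_univ, Fintype.card_fin, smul_eq_mul, smul_eq_mul]
    conv_lhs => rw [← Nat.div_add_mod m b]
    rw [Bound_mul_add_add_one hb _ hr, Bound_mul_add_one hb]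
    linarith [Nat.div_add_mod m b]

lemma Bound_succ_eq_add_sInf (hb : 1 < b) (m : ℕ) :
    Bound (m + 1) b =
      m + 1 + sInf {t : ℕ | ∃ a : Fin b → ℕ, (∑ i, a i) = m ∧ t = ∑ i, Bound (a i) b} := by
  obtain ⟨a, hsum, hBound⟩ := exists_sum_eq_and_Bound_succ_eq hb m
  have hleast : IsLeast {t : ℕ | ∃ a : Fin b → ℕ, (∑ i, a i) = m ∧ t = ∑ i, Bound (a i) b}
      (∑ i, Bound (a i) b) := by
    refine ⟨⟨a, hsum, rfl⟩, ?_⟩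
    rintro t ⟨a', hsum', rfl⟩
    have := Bound_succ_le_add_sum hb (Fintype.card_fin b).le m a' hsum'
    omega
  rw [hleast.csInf_eq]
  exact hBound

end CompleteTree

section Statements

open GuessingGame

variable {α ρ : Type*} [DecidableEq α] [DecidableEq ρ]

theorem statement_4 (b : ℕ) (hb : 1 < b) :
    Bound 0 b = 0 ∧
      ∀ n : ℕ, 1 ≤ n →
        Bound n b =
          n + sInf {t : ℕ |
            ∃ a : Fin b → ℕ, (∑ i, a i) = n - 1 ∧ t = ∑ i, Bound (a i) b} := by
  refine ⟨rfl, fun n hn => ?_⟩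
  obtain ⟨m, rfl⟩ := Nat.exists_eq_add_of_le' hn
  rw [Nat.add_sub_cancel]
  exact Bound_succ_eq_add_sInf hb m

end Statements
end

section
/- For any integer n ≥ 0 and integers b, b' with 1 ≤ b' ≤ b, one has Bound(n,b') ≥ Bound(n,b); that is, for fixed n, the function b ↦ Bound(n,b) is non-increasing in b. -/
section Statements

open GuessingGame

variable {α ρ : Type*} [DecidableEq α] [DecidableEq ρ]

/-!
With `S_j = 1 + b + ⋯ + b^(j-1)` (so `S_j = j` when `b = 1`), the closed form of `Bound` is
`Bound n b = ∑_{j ≥ 0} (n - S_j)₊`: the `Σ i·b^(i-1)` part of the formula is the sum of the tails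
`S_k - S_j` for `j ≤ k`, and `k` is the last index with `S_k ≤ n`. Each `S_j` is monotone in `b`,
so each summand, and hence `Bound n b`, is antitone in `b`.
-/

open Finset

theorem sum_range_succ_tsub_sum_range (f : ℕ → ℕ) (k : ℕ) :
    ∑ j ∈ range (k + 1), (∑ i ∈ range k, f i - ∑ i ∈ range j, f i) =
      ∑ i ∈ range k, (i + 1) * f i := by
  induction k with
  | zero => simp
  | succ k ih =>
    have hpartial : ∀ j ∈ range (k + 1),
        ∑ i ∈ range (k + 1), f i - ∑ i ∈ range j, f i =
          (∑ i ∈ range k, f i - ∑ i ∈ range j, f i) + f k := fun j hj => by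
      have : ∑ i ∈ range j, f i ≤ ∑ i ∈ range k, f i :=
        sum_le_sum_of_subset (range_subset_range.2 (Nat.lt_succ_iff.1 (mem_range.1 hj)))
      rw [sum_range_succ]
      omega
    rw [sum_range_succ _ (k + 1), tsub_self, add_zero, sum_congr rfl hpartial,
      sum_add_distrib, ih, sum_const, card_range, smul_eq_mul, sum_range_succ]

theorem geomSum_le_iff_le_log {b : ℕ} (hb : 2 ≤ b) (n j : ℕ) :
    ∑ i ∈ range j, b ^ i ≤ n ↔ j ≤ Nat.log b (n * (b - 1) + 1) := by
  obtain ⟨c, rfl⟩ : ∃ c, b = c + 1 := ⟨b - 1, by omega⟩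
  rw [Nat.le_log_iff_pow_le (by omega) (by omega), ← geom_sum_mul_add, add_tsub_cancel_right,
    add_le_add_iff_right, Nat.mul_le_mul_right_iff (by omega)]

theorem bound_eq_sum_tsub_geomSum (n : ℕ) {b : ℕ} (hb : 1 ≤ b) :
    Bound n b = ∑ j ∈ range (n + 1), (n - ∑ i ∈ range j, b ^ i) := by
  rcases Nat.eq_zero_or_pos n with rfl | hn
  · simp [Bound]
  obtain rfl | hb := hb.eq_or_lt
  · have hreflect := sum_range_reflect (fun j => j) (n + 1)
    simp only [add_tsub_cancel_right] at hreflect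
    simp only [Bound, if_neg hn.ne', if_pos, one_pow, sum_const, card_range, smul_eq_mul, mul_one]
    rw [hreflect, sum_range_id, add_tsub_cancel_right, mul_comm]
  set k := Nat.log b (n * (b - 1) + 1)
  have hgeom : ∀ j, ∑ i ∈ range j, b ^ i ≤ n ↔ j ≤ k := geomSum_le_iff_le_log hb n
  have hkn : k ≤ n :=
    calc k = ∑ _i ∈ range k, 1 := by simp
      _ ≤ ∑ i ∈ range k, b ^ i := sum_le_sum fun i _ => Nat.one_le_pow _ _ (by omega)
      _ ≤ n := (hgeom k).2 le_rfl
  calc Bound n b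
      = ∑ i ∈ range k, (i + 1) * b ^ i + (k + 1) * (n - ∑ i ∈ range k, b ^ i) := by
        rw [Bound, if_neg hn.ne', if_neg hb.ne', ← Nat.geomSum_eq hb]
    _ = ∑ j ∈ range (k + 1), ((∑ i ∈ range k, b ^ i - ∑ i ∈ range j, b ^ i) +
          (n - ∑ i ∈ range k, b ^ i)) := by
        rw [sum_add_distrib, sum_range_succ_tsub_sum_range, sum_const, card_range, smul_eq_mul]
    _ = ∑ j ∈ range (k + 1), (n - ∑ i ∈ range j, b ^ i) := sum_congr rfl fun j hj => by
        have hjk : ∑ i ∈ range j, b ^ i ≤ ∑ i ∈ range k, b ^ i :=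
          sum_le_sum_of_subset (range_subset_range.2 (Nat.lt_succ_iff.1 (mem_range.1 hj)))
        have hSk := (hgeom k).2 le_rfl
        omega
    _ = ∑ j ∈ range (n + 1), (n - ∑ i ∈ range j, b ^ i) :=
        sum_subset (range_subset_range.2 (by omega)) fun j _ hj => by
          have := (hgeom j).not.2 (by simpa using hj)
          omega

theorem statement_6 (n b b' : ℕ) (hb' : 1 ≤ b') (hbb : b' ≤ b) :
    Bound n b ≤ Bound n b' := by
  rw [bound_eq_sum_tsub_geomSum n (hb'.trans hbb), bound_eq_sum_tsub_geomSum n hb']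
  gcongr

end Statements
end

section
/- For any candidate set C ⊆ S, LB_2(C) ≤ MinTotal(C), i.e., Bound(|C|, MaxSplits(C)) ≤ MinTotal(C). -/
namespace GG8

/-- `N b v = 1 + b + ... + b^(v-1)`. -/
def myN (b v : ℕ) : ℕ := ∑ i ∈ Finset.range v, b ^ i

/-- Sum-form of `Bound`. -/
def SB (n b : ℕ) : ℕ := n + ∑ v ∈ Finset.range n, (n - myN b (v + 1))

lemma myN_succ (b v : ℕ) : myN b (v + 1) = b * myN b v + 1 := by
  simpa [myN] using geom_sum_succ (x := b) (n := v)

lemma myN_succ' (b v : ℕ) : myN b (v + 1) = myN b v + b ^ v := by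
  simp [myN, Finset.sum_range_succ]

lemma one_le_myN_succ (b v : ℕ) : 1 ≤ myN b (v + 1) := by
  rw [myN_succ]; omega

lemma myN_mono (b : ℕ) : Monotone (myN b) := by
  intro v w h
  exact Finset.sum_le_sum_of_subset (Finset.range_subset_range.2 h)

lemma le_myN (b v : ℕ) (hb : 1 ≤ b) : v ≤ myN b v := by
  calc v = ∑ _i ∈ Finset.range v, 1 := by simp
  _ ≤ myN b v := Finset.sum_le_sum fun i _ => Nat.one_le_pow _ _ hb

lemma SB_zero (b : ℕ) : SB 0 b = 0 := by simp [SB]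

lemma SB_one (b : ℕ) : SB 1 b = 1 := by
  have := one_le_myN_succ b 0
  simp only [SB, Finset.sum_range_one]
  omega

lemma SB_anti {b b' : ℕ} (h : b' ≤ b) (n : ℕ) : SB n b ≤ SB n b' := by
  unfold SB
  gcongr with v hv
  exact Finset.sum_le_sum fun i _ => Nat.pow_le_pow_left h i

end GG8

namespace GG8core
open Finset

lemma core {ι : Type*} [DecidableEq ι] (T : Finset ι) (f : ι → ℕ) {n b e : ℕ}
    (hb : 1 ≤ b) (hn : 1 ≤ n) (he : e ≤ 1)
    (hsum : (∑ r ∈ T, f r) + e = n)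
    (hcard : (T.filter fun r => f r ≠ 0).card + e ≤ b)
    (hlt : ∀ r ∈ T, f r < n) :
    GG8.SB n b ≤ n + ∑ r ∈ T, GG8.SB (f r) b := by
  obtain ⟨n', rfl⟩ : ∃ n', n = n' + 1 := ⟨n - 1, by omega⟩
  have key : ∀ v : ℕ, (n' + 1) - GG8.myN b (v + 2) ≤ ∑ r ∈ T, (f r - GG8.myN b (v + 1)) := by
    intro v
    set c := GG8.myN b (v + 1) with hc
    set m := (T.filter fun r => f r ≠ 0).card with hm
    have h1 : ∑ r ∈ T, f r ≤ (∑ r ∈ T, (f r - c)) + m * c := by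
      have e1 : ∑ r ∈ T.filter (fun r => f r ≠ 0), f r = ∑ r ∈ T, f r :=
        Finset.sum_filter_ne_zero T
      calc ∑ r ∈ T, f r = ∑ r ∈ T.filter (fun r => f r ≠ 0), f r := e1.symm
        _ ≤ ∑ r ∈ T.filter (fun r => f r ≠ 0), ((f r - c) + c) :=
            Finset.sum_le_sum fun r _ => by omega
        _ = (∑ r ∈ T.filter (fun r => f r ≠ 0), (f r - c)) + m * c := by
            rw [Finset.sum_add_distrib, Finset.sum_const, smul_eq_mul]
        _ ≤ (∑ r ∈ T, (f r - c)) + m * c :=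
            Nat.add_le_add_right (Finset.sum_le_sum_of_subset (Finset.filter_subset _ _)) _
    have h2 : m * c + e ≤ b * c + 1 := by
      have hmb : m ≤ b := by omega
      have := Nat.mul_le_mul_right c hmb
      omega
    have h3 : GG8.myN b (v + 2) = b * c + 1 := GG8.myN_succ b (v + 1)
    calc (n' + 1) - GG8.myN b (v + 2) = ((∑ r ∈ T, f r) + e) - (b * c + 1) := by rw [hsum, h3]
      _ ≤ ((∑ r ∈ T, f r) + e) - (m * c + e) := tsub_le_tsub_left h2 _
      _ = (∑ r ∈ T, f r) - m * c := Nat.add_sub_add_right _ _ _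
      _ ≤ ∑ r ∈ T, (f r - c) := tsub_le_iff_right.mpr h1
  have hsplit : GG8.SB (n' + 1) b =
      (n' + 1) + ((∑ v ∈ Finset.range n', ((n' + 1) - GG8.myN b (v + 2))) +
        ((n' + 1) - GG8.myN b 1)) := by
    unfold GG8.SB
    rw [Finset.sum_range_succ']
  have hmyN1 : GG8.myN b 1 = 1 := by simp [GG8.myN]
  have h5 : ∑ v ∈ Finset.range n', ((n' + 1) - GG8.myN b (v + 2)) ≤
      ∑ v ∈ Finset.range n', ∑ r ∈ T, (f r - GG8.myN b (v + 1)) :=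
    Finset.sum_le_sum fun v _ => key v
  have h6 : ∑ v ∈ Finset.range n', ∑ r ∈ T, (f r - GG8.myN b (v + 1)) =
      ∑ r ∈ T, ∑ v ∈ Finset.range n', (f r - GG8.myN b (v + 1)) := Finset.sum_comm
  have h7 : ∑ r ∈ T, ∑ v ∈ Finset.range n', (f r - GG8.myN b (v + 1)) =
      ∑ r ∈ T, ∑ v ∈ Finset.range (f r), (f r - GG8.myN b (v + 1)) := by
    refine Finset.sum_congr rfl fun r hr => ?_
    refine (Finset.sum_subset (Finset.range_subset_range.2 (by have := hlt r hr; omega)) ?_).symm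
    intro v hv hnv
    have hvf : f r ≤ v := by
      simp only [Finset.mem_range, not_lt] at hnv
      exact hnv
    have := GG8.le_myN b (v + 1) hb
    omega
  have hRHS : ∑ r ∈ T, GG8.SB (f r) b =
      (∑ r ∈ T, f r) + ∑ r ∈ T, ∑ v ∈ Finset.range (f r), (f r - GG8.myN b (v + 1)) := by
    unfold GG8.SB
    rw [Finset.sum_add_distrib]
  omega

end GG8core

namespace GG8

lemma myN_pred_pow (b v : ℕ) (hb : 1 ≤ b) : (b - 1) * myN b v + 1 = b ^ v := by
  obtain ⟨b', rfl⟩ : ∃ b'', b = b'' + 1 := ⟨b - 1, by omega⟩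
  simp only [Nat.add_sub_cancel]
  induction v with
  | zero => simp [myN]
  | succ v ih =>
    rw [myN_succ', Nat.mul_add, pow_succ]
    have : b' * (b' + 1) ^ v + ((b' + 1) ^ v) = (b' + 1) ^ v * (b' + 1) := by ring
    omega

lemma sum_myN_identity (b k : ℕ) :
    (∑ v ∈ Finset.range k, myN b (v + 1)) + (∑ i ∈ Finset.range k, (i + 1) * b ^ i) =
      (k + 1) * myN b k := by
  induction k with
  | zero => simp [myN]
  | succ k ih =>
    rw [Finset.sum_range_succ, Finset.sum_range_succ, myN_succ' b k]
    have h1 : (k + 1 + 1) * (myN b k + b ^ k) =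
        (k + 1) * myN b k + (myN b k + b ^ k + (k + 1) * b ^ k) := by ring
    omega

lemma Bound_eq_SB (n b : ℕ) (hb : 1 ≤ b) : Bound n b = SB n b := by
  rcases Nat.eq_zero_or_pos n with hn0 | hn0
  · subst hn0; simp [Bound, SB]
  rcases eq_or_lt_of_le hb with hb1 | hb2
  · -- b = 1
    subst hb1
    have hone : ∀ v : ℕ, myN 1 (v + 1) = v + 1 := by intro v; simp [myN]
    have hrefl : ∑ v ∈ Finset.range n, (n - myN 1 (v + 1)) = ∑ v ∈ Finset.range n, v := by
      rw [← Finset.sum_range_reflect (fun j => j) n]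
      refine Finset.sum_congr rfl fun v hv => ?_
      rw [hone]
      simp only [Finset.mem_range] at hv
      omega
    have h2 := Finset.sum_range_id_mul_two n
    have h4 : n * (n + 1) = n * (n - 1) + 2 * n := by
      obtain ⟨n', rfl⟩ : ∃ m, n = m + 1 := ⟨n - 1, by omega⟩
      simp only [Nat.add_sub_cancel]
      ring
    simp only [Bound, SB, if_neg (by omega : ¬ n = 0), if_pos rfl, if_true, hrefl]
    omega
  · -- 2 ≤ b
    have hbne : b ≠ 1 := by omega
    have hb1 : 1 ≤ b := hb
    set k := Nat.log b (n * (b - 1) + 1) with hk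
    have hpp := myN_pred_pow b k hb1
    have hpp' := myN_pred_pow b (k + 1) hb1
    have hbk_le : b ^ k ≤ n * (b - 1) + 1 := Nat.pow_log_le_self b (by omega)
    have hlt : n * (b - 1) + 1 < b ^ (k + 1) := Nat.lt_pow_succ_log_self hb2 _
    have hNk : (b ^ k - 1) / (b - 1) = myN b k := by
      have h1 : b ^ k - 1 = (b - 1) * myN b k := by omega
      rw [h1, Nat.mul_div_cancel_left _ (by omega : 0 < b - 1)]
    have hcomm : n * (b - 1) = (b - 1) * n := Nat.mul_comm _ _
    have hNk_le : myN b k ≤ n := by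
      have h : (b - 1) * myN b k ≤ (b - 1) * n := by omega
      exact Nat.le_of_mul_le_mul_left h (by omega)
    have hn_lt : n < myN b (k + 1) := by
      have h : (b - 1) * n < (b - 1) * myN b (k + 1) := by omega
      exact Nat.lt_of_mul_lt_mul_left h
    have hk_le_n : k ≤ n := le_trans (le_myN b k hb1) hNk_le
    have hrange : ∑ v ∈ Finset.range n, (n - myN b (v + 1)) =
        ∑ v ∈ Finset.range k, (n - myN b (v + 1)) := by
      refine (Finset.sum_subset (Finset.range_subset_range.2 hk_le_n) ?_).symm
      intro v hv hnv
      simp only [Finset.mem_range, not_lt] at hnv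
      have : myN b (k + 1) ≤ myN b (v + 1) := myN_mono b (by omega)
      omega
    have hsub : (∑ v ∈ Finset.range k, (n - myN b (v + 1))) +
        (∑ v ∈ Finset.range k, myN b (v + 1)) = k * n := by
      rw [← Finset.sum_add_distrib]
      have hterm : ∀ v ∈ Finset.range k, (n - myN b (v + 1)) + myN b (v + 1) = n := by
        intro v hv
        simp only [Finset.mem_range] at hv
        have : myN b (v + 1) ≤ myN b k := myN_mono b (by omega)
        omega
      rw [Finset.sum_congr rfl hterm, Finset.sum_const, Finset.card_range, smul_eq_mul]
    have hid := sum_myN_identity b k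
    have hmul : (k + 1) * (n - myN b k) + (k + 1) * myN b k = (k + 1) * n := by
      rw [← Nat.mul_add, Nat.sub_add_cancel hNk_le]
    have hkn : (k + 1) * n = k * n + n := by ring
    simp only [Bound, SB, if_neg (by omega : ¬ n = 0), if_neg hbne, ← hk, hNk, hrange]
    omega

end GG8

namespace GG8

open Finset GuessingGame

variable {α ρ : Type*} [DecidableEq α] [DecidableEq ρ] (gm : GuessingGame α ρ)

lemma mem_split {C : Finset α} {g c : α} {r : ρ} :
    c ∈ gm.split C g r ↔ c ∈ C ∧ gm.ans g c = r := by
  simp [GuessingGame.split]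

lemma split_subset (C : Finset α) (g : α) (r : ρ) : gm.split C g r ⊆ C :=
  Finset.filter_subset _ _

lemma card_split_sum {C : Finset α} (hCS : C ⊆ gm.S) {g : α} (hg : g ∈ gm.G) :
    ∑ r ∈ gm.R, (gm.split C g r).card = C.card :=
  (Finset.card_eq_sum_card_fiberwise (fun c hc => gm.ans_mem g hg c (hCS hc))).symm

lemma split_rstar_subset {C : Finset α} (hCS : C ⊆ gm.S) {g : α} (hg : g ∈ gm.G) :
    gm.split C g gm.rstar ⊆ {g} := by
  intro c hc
  rw [mem_split] at hc
  simp only [Finset.mem_singleton]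
  exact ((gm.ans_eq_rstar_iff g hg c (hCS hc.1)).mp hc.2).symm

lemma split_ne_subset_erase {C : Finset α} (hCS : C ⊆ gm.S) {g : α} (hg : g ∈ gm.G)
    {r : ρ} (hr : r ≠ gm.rstar) : gm.split C g r ⊆ C.erase g := by
  intro c hc
  rw [mem_split] at hc
  refine Finset.mem_erase.2 ⟨?_, hc.1⟩
  intro hcg
  subst hcg
  exact hr (hc.2 ▸ ((gm.ans_eq_rstar_iff c hg c (hCS hc.1)).mpr rfl).symm).symm

lemma nSplits_le_maxSplits {C : Finset α} {g : α} (hg : g ∈ gm.G) :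
    gm.nSplits g C ≤ gm.MaxSplits C := by
  unfold GuessingGame.MaxSplits
  exact Finset.le_sup (f := fun g => gm.nSplits g C) hg

lemma nSplits_mono {C C' : Finset α} (h : C' ⊆ C) (g : α) :
    gm.nSplits g C' ≤ gm.nSplits g C := by
  apply Finset.card_le_card
  intro r hr
  simp only [Finset.mem_filter] at *
  exact ⟨hr.1, hr.2.mono (Finset.filter_subset_filter _ h)⟩

lemma maxSplits_mono {C C' : Finset α} (h : C' ⊆ C) : gm.MaxSplits C' ≤ gm.MaxSplits C := by
  unfold GuessingGame.MaxSplits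
  exact Finset.sup_le fun g hg => le_trans (nSplits_mono gm h g) (Finset.le_sup (f := fun g => gm.nSplits g C) hg)

lemma one_le_nSplits {C : Finset α} (hCS : C ⊆ gm.S) (hC : C.Nonempty) {g : α}
    (hg : g ∈ gm.G) : 1 ≤ gm.nSplits g C := by
  obtain ⟨c, hc⟩ := hC
  refine Finset.card_pos.2 ⟨gm.ans g c, ?_⟩
  exact Finset.mem_filter.2 ⟨gm.ans_mem g hg c (hCS hc), ⟨c, (mem_split gm).2 ⟨hc, rfl⟩⟩⟩

lemma mem_UG_of_mem {C : Finset α} (hCS : C ⊆ gm.S) {g : α} (hg : g ∈ C) : g ∈ gm.UG C := by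
  unfold GuessingGame.UG
  split_ifs with h
  · have hgG := gm.S_subset_G (hCS hg)
    refine Finset.mem_filter.2 ⟨hgG, ?_⟩
    obtain ⟨c, hcC, hcg⟩ := Finset.exists_mem_ne h g
    have h1 : gm.rstar ∈ gm.R.filter fun r => (gm.split C g r).Nonempty :=
      Finset.mem_filter.2 ⟨gm.rstar_mem,
        ⟨g, (mem_split gm).2 ⟨hg, (gm.ans_eq_rstar_iff g hgG g (hCS hg)).mpr rfl⟩⟩⟩
    have h2 : gm.ans g c ∈ gm.R.filter fun r => (gm.split C g r).Nonempty :=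
      Finset.mem_filter.2 ⟨gm.ans_mem g hgG c (hCS hcC),
        ⟨c, (mem_split gm).2 ⟨hcC, rfl⟩⟩⟩
    have hne : gm.ans g c ≠ gm.rstar := fun hcon =>
      hcg ((gm.ans_eq_rstar_iff g hgG c (hCS hcC)).mp hcon).symm
    have : 1 < (gm.R.filter fun r => (gm.split C g r).Nonempty).card :=
      Finset.one_lt_card.2 ⟨gm.rstar, h1, gm.ans g c, h2, hne.symm⟩
    unfold GuessingGame.nSplits
    omega
  · exact hg

lemma UG_subset_G {C : Finset α} (hCS : C ⊆ gm.S) : gm.UG C ⊆ gm.G := by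
  unfold GuessingGame.UG
  split_ifs with h
  · exact Finset.filter_subset _ _
  · exact fun g hg => gm.S_subset_G (hCS hg)

lemma two_le_nSplits {C : Finset α} (hCS : C ⊆ gm.S) (h1 : 1 < C.card) {g : α}
    (hg : g ∈ gm.UG C) : 2 ≤ gm.nSplits g C := by
  have hgG := UG_subset_G gm hCS hg
  have hne : gm.nSplits g C ≠ 1 := by
    unfold GuessingGame.UG at hg
    rw [if_pos h1] at hg
    exact (Finset.mem_filter.1 hg).2
  have := one_le_nSplits gm hCS (Finset.card_pos.1 (by omega)) hgG
  omega

lemma split_card_lt {C : Finset α} (hCS : C ⊆ gm.S) (hC : C.Nonempty) {g : α}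
    (hg : g ∈ gm.UG C) {r : ρ} (hr : r ≠ gm.rstar) :
    (gm.split C g r).card < C.card := by
  have hgG := UG_subset_G gm hCS hg
  rcases lt_or_ge 1 C.card with h1 | h1
  · have h2 : 2 ≤ gm.nSplits g C := two_le_nSplits gm hCS h1 hg
    have hlt1 : 1 < (gm.R.filter fun r => (gm.split C g r).Nonempty).card := by
      unfold GuessingGame.nSplits at h2; omega
    obtain ⟨r₁, hr₁, r₂, hr₂, hr12⟩ := Finset.one_lt_card.1 hlt1
    have hpick : ∃ r', r' ≠ r ∧ r' ∈ gm.R.filter fun r => (gm.split C g r).Nonempty := by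
      by_cases hq : r₁ = r
      · exact ⟨r₂, by rw [← hq]; exact hr12.symm, hr₂⟩
      · exact ⟨r₁, hq, hr₁⟩
    obtain ⟨r', hr'ne, hr'mem⟩ := hpick
    obtain ⟨c', hc'⟩ := (Finset.mem_filter.1 hr'mem).2
    rw [mem_split] at hc'
    apply Finset.card_lt_card
    rw [Finset.ssubset_iff_of_subset (split_subset gm C g r)]
    refine ⟨c', hc'.1, fun hmem => ?_⟩
    rw [mem_split] at hmem
    exact hr'ne (hc'.2 ▸ hmem.2.symm).symm
  · have hgC : g ∈ C := by
      unfold GuessingGame.UG at hg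
      rw [if_neg (by omega)] at hg
      exact hg
    have hle := Finset.card_le_card (split_ne_subset_erase gm hCS hgG hr)
    have hcard := Finset.card_erase_of_mem hgC
    have hpos : 1 ≤ C.card := Finset.card_pos.2 hC
    omega

end GG8

namespace GG8

open Finset GuessingGame

variable {α ρ : Type*} [DecidableEq α] [DecidableEq ρ] (gm : GuessingGame α ρ)

lemma minTotalAux_empty (n : ℕ) : gm.MinTotalAux n (∅ : Finset α) = 0 := by
  cases n <;> simp [GuessingGame.MinTotalAux]

lemma minTotalAux_congr : ∀ (k : ℕ) (C : Finset α), C.card ≤ k → C ⊆ gm.S →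
    ∀ n m : ℕ, C.card ≤ n → C.card ≤ m → gm.MinTotalAux n C = gm.MinTotalAux m C := by
  intro k
  induction k with
  | zero =>
    intro C hk _ n m _ _
    have hC : C = ∅ := Finset.card_eq_zero.1 (by omega)
    subst hC
    rw [minTotalAux_empty, minTotalAux_empty]
  | succ k ih =>
    intro C hk hCS n m hn hm
    by_cases hC : C = ∅
    · subst hC
      rw [minTotalAux_empty, minTotalAux_empty]
    have hCne : C.Nonempty := Finset.nonempty_iff_ne_empty.2 hC
    have hpos : 1 ≤ C.card := Finset.card_pos.2 hCne
    obtain ⟨n', rfl⟩ : ∃ n', n = n' + 1 := ⟨n - 1, by omega⟩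
    obtain ⟨m', rfl⟩ : ∃ m', m = m' + 1 := ⟨m - 1, by omega⟩
    simp only [GuessingGame.MinTotalAux, if_neg hC]
    have himg : ((gm.UG C).image fun g =>
          C.card + ∑ r ∈ gm.R.erase gm.rstar, gm.MinTotalAux n' (gm.split C g r)) =
        ((gm.UG C).image fun g =>
          C.card + ∑ r ∈ gm.R.erase gm.rstar, gm.MinTotalAux m' (gm.split C g r)) := by
      apply Finset.image_congr
      intro g hg
      rw [Finset.mem_coe] at hg
      refine congrArg (HAdd.hAdd C.card) ?_
      refine Finset.sum_congr rfl fun r hr => ?_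
      have hrne : r ≠ gm.rstar := (Finset.mem_erase.1 hr).1
      have hlt : (gm.split C g r).card < C.card := split_card_lt gm hCS hCne hg hrne
      exact ih (gm.split C g r) (by omega) (le_trans (split_subset gm C g r) hCS)
        n' m' (by omega) (by omega)
    rw [himg]

lemma minTotal_empty : gm.MinTotal (∅ : Finset α) = 0 := by
  simp [GuessingGame.MinTotal, minTotalAux_empty]

lemma minTotal_eq {C : Finset α} (hCS : C ⊆ gm.S) (hC : C ≠ ∅) :
    gm.MinTotal C = sInf (↑((gm.UG C).image fun g =>
      C.card + ∑ r ∈ gm.R.erase gm.rstar, gm.MinTotal (gm.split C g r)) : Set ℕ) := by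
  have hCne : C.Nonempty := Finset.nonempty_iff_ne_empty.2 hC
  have hpos : 1 ≤ C.card := Finset.card_pos.2 hCne
  unfold GuessingGame.MinTotal
  obtain ⟨c', hc'⟩ : ∃ c', C.card = c' + 1 := ⟨C.card - 1, by omega⟩
  rw [hc']
  simp only [GuessingGame.MinTotalAux, if_neg hC]
  rw [hc']
  have himg : ((gm.UG C).image fun g =>
        c' + 1 + ∑ r ∈ gm.R.erase gm.rstar, gm.MinTotalAux c' (gm.split C g r)) =
      ((gm.UG C).image fun g =>
        c' + 1 + ∑ r ∈ gm.R.erase gm.rstar, gm.MinTotalAux (gm.split C g r).card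
          (gm.split C g r)) := by
    apply Finset.image_congr
    intro g hg
    rw [Finset.mem_coe] at hg
    refine congrArg (HAdd.hAdd (c' + 1)) ?_
    refine Finset.sum_congr rfl fun r hr => ?_
    have hrne : r ≠ gm.rstar := (Finset.mem_erase.1 hr).1
    have hlt : (gm.split C g r).card < C.card := split_card_lt gm hCS hCne hg hrne
    exact minTotalAux_congr gm (gm.split C g r).card (gm.split C g r) le_rfl
      (le_trans (split_subset gm C g r) hCS) c' (gm.split C g r).card (by omega) le_rfl
  rw [himg]

lemma main_bound : ∀ (k : ℕ) (C : Finset α), C.card ≤ k → C ⊆ gm.S →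
    SB C.card (gm.MaxSplits C) ≤ gm.MinTotal C := by
  intro k
  induction k with
  | zero =>
    intro C hk hCS
    have : C.card = 0 := by omega
    rw [this, SB_zero]
    exact Nat.zero_le _
  | succ k ih =>
    intro C hk hCS
    by_cases hC : C = ∅
    · subst hC
      simp [SB_zero, minTotal_empty]
    have hCne : C.Nonempty := Finset.nonempty_iff_ne_empty.2 hC
    have hpos : 1 ≤ C.card := Finset.card_pos.2 hCne
    rw [minTotal_eq gm hCS hC]
    have hUGne : (gm.UG C).Nonempty := by
      obtain ⟨c, hc⟩ := hCne
      exact ⟨c, mem_UG_of_mem gm hCS hc⟩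
    have hSne : (↑((gm.UG C).image fun g =>
        C.card + ∑ r ∈ gm.R.erase gm.rstar, gm.MinTotal (gm.split C g r)) : Set ℕ).Nonempty := by
      rw [Finset.coe_nonempty]
      exact hUGne.image _
    have hmem := Nat.sInf_mem hSne
    rw [Finset.mem_coe, Finset.mem_image] at hmem
    obtain ⟨g, hgUG, hval⟩ := hmem
    rw [← hval]
    have hgG := UG_subset_G gm hCS hgUG
    rcases lt_or_ge 1 C.card with hlarge | hsmall
    · -- main case
      set b := gm.MaxSplits C with hb
      set e := (gm.split C g gm.rstar).card with he_def
      have he : e ≤ 1 := by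
        have := Finset.card_le_card (split_rstar_subset gm hCS hgG)
        simpa using this
      have hsum : (∑ r ∈ gm.R.erase gm.rstar, (gm.split C g r).card) + e = C.card := by
        rw [he_def, Finset.sum_erase_add _ _ gm.rstar_mem]
        exact card_split_sum gm hCS hgG
      have hnsp : gm.nSplits g C =
          ((gm.R.erase gm.rstar).filter fun r => ((gm.split C g r).card ≠ 0)).card + e := by
        unfold GuessingGame.nSplits
        have hR : gm.R = insert gm.rstar (gm.R.erase gm.rstar) :=
          (Finset.insert_erase gm.rstar_mem).symm
        conv_lhs => rw [hR, Finset.filter_insert]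
        have hfc : (gm.R.erase gm.rstar).filter (fun r => (gm.split C g r).Nonempty) =
            (gm.R.erase gm.rstar).filter (fun r => (gm.split C g r).card ≠ 0) := by
          apply Finset.filter_congr
          intro r _
          simp [Finset.nonempty_iff_ne_empty, ← Finset.card_eq_zero]
        split_ifs with hstar
        · have he1 : e = 1 := le_antisymm he (Finset.card_pos.2 hstar)
          rw [Finset.card_insert_of_notMem
            (fun hmem => (Finset.mem_erase.1 (Finset.filter_subset _ _ hmem)).1 rfl), hfc, he1]
        · have he0 : e = 0 := by
            rw [he_def, Finset.card_eq_zero]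
            exact Finset.not_nonempty_iff_eq_empty.1 hstar
          rw [hfc, he0, add_zero]
      have h2ns : 2 ≤ gm.nSplits g C := two_le_nSplits gm hCS hlarge hgUG
      have hb2 : 2 ≤ b := le_trans h2ns (nSplits_le_maxSplits gm hgG)
      have hcard : ((gm.R.erase gm.rstar).filter fun r =>
          ((gm.split C g r).card ≠ 0)).card + e ≤ b := by
        rw [← hnsp]
        exact nSplits_le_maxSplits gm hgG
      have hlt : ∀ r ∈ gm.R.erase gm.rstar, (gm.split C g r).card < C.card :=
        fun r hr => split_card_lt gm hCS hCne hgUG (Finset.mem_erase.1 hr).1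
      have hcore := GG8core.core (gm.R.erase gm.rstar) (fun r => (gm.split C g r).card)
        (by omega : 1 ≤ b) hpos he hsum hcard hlt
      refine le_trans hcore (Nat.add_le_add_left ?_ _)
      refine Finset.sum_le_sum fun r hr => ?_
      have hsplit_lt := hlt r hr
      calc SB (gm.split C g r).card b
          ≤ SB (gm.split C g r).card (gm.MaxSplits (gm.split C g r)) :=
            SB_anti (maxSplits_mono gm (split_subset gm C g r)) _
        _ ≤ gm.MinTotal (gm.split C g r) :=
            ih (gm.split C g r) (by omega) (le_trans (split_subset gm C g r) hCS)
    · have hc1 : C.card = 1 := by omega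
      rw [hc1, SB_one, ← hc1]
      exact Nat.le_add_right _ _
end GG8

section Statements

open GuessingGame

variable {α ρ : Type*} [DecidableEq α] [DecidableEq ρ]

theorem statement_8 (gm : GuessingGame α ρ) (C : Finset α) (hCS : C ⊆ gm.S) :
    gm.LB 2 C ≤ gm.MinTotal C := by

  by_cases hC : C = ∅
  · subst hC
    have h0 : gm.LB 2 (∅ : Finset α) = 0 := by
      show Bound (Finset.card ∅) (gm.MaxSplits ∅) = 0
      simp [Bound]
    rw [h0]
    exact Nat.zero_le _
  · have hCne : C.Nonempty := Finset.nonempty_iff_ne_empty.2 hC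
    have hb1 : 1 ≤ gm.MaxSplits C := by
      obtain ⟨c, hc⟩ := hCne
      have hgG := gm.S_subset_G (hCS hc)
      exact le_trans (GG8.one_le_nSplits gm hCS ⟨c, hc⟩ hgG) (GG8.nSplits_le_maxSplits gm hgG)
    have hLB : gm.LB 2 C = Bound C.card (gm.MaxSplits C) := rfl
    rw [hLB, GG8.Bound_eq_SB _ _ hb1]
    exact GG8.main_bound gm C.card C le_rfl hCS

end Statements
end
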